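/- Let d ≥ 1 be an integer and ξ, a, L > 0 real numbers. Let x_1, …, x_d, y_1, …, y_d ∈ ℝ^d satisfy ‖x_i − y_i‖₂ ≤ ξ and ‖y_i‖₂ ≤ a for every i ∈ {1,…,d}, and set X = Σ_{i=1}^d x_i x_iᵀ and Y = Σ_{i=1}^d y_i y_iᵀ. Then for every u ∈ ℝ^d with ‖u‖₂ ≤ L, | ‖u‖_X − ‖u‖_Y | ≤ L·√(d·ξ² + 2·d·a·ξ). -/
import Mathlib


open Matrix Finset

/-- Euclidean norm of a vector in `ℝ^d`. -/
noncomputable def euclNorm {d : ℕ} (x : Fin d → ℝ) : ℝ := Real.sqrt (x ⬝ᵥ x)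

/-- Norm weighted by a (positive semidefinite) matrix `M`: `‖x‖_M = √(xᵀ M x)`. -/
noncomputable def mnorm {d : ℕ} (M : Matrix (Fin d) (Fin d) ℝ) (x : Fin d → ℝ) : ℝ :=
  Real.sqrt (x ⬝ᵥ M.mulVec x)

lemma euclNorm_nonneg {d : ℕ} (v : Fin d → ℝ) : 0 ≤ euclNorm v := Real.sqrt_nonneg _

lemma dot_self_nonneg {d : ℕ} (v : Fin d → ℝ) : 0 ≤ v ⬝ᵥ v := by
  simpa [dotProduct, ← sq] using Finset.sum_nonneg fun i (_ : i ∈ Finset.univ) => sq_nonneg (v i)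

lemma abs_dot_le {d : ℕ} (v u : Fin d → ℝ) : |v ⬝ᵥ u| ≤ euclNorm v * euclNorm u := by
  have h := Finset.sum_mul_sq_le_sq_mul_sq Finset.univ v u
  rw [← Real.sqrt_sq_eq_abs]
  have h2 : (v ⬝ᵥ u) ^ 2 ≤ (v ⬝ᵥ v) * (u ⬝ᵥ u) := by
    simpa [dotProduct, sq, mul_comm, mul_left_comm, mul_assoc] using h
  calc Real.sqrt ((v ⬝ᵥ u) ^ 2) ≤ Real.sqrt ((v ⬝ᵥ v) * (u ⬝ᵥ u)) := Real.sqrt_le_sqrt h2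
    _ = euclNorm v * euclNorm u := Real.sqrt_mul (dot_self_nonneg v) _

lemma abs_sqrt_sub_sqrt {A B : ℝ} (hA : 0 ≤ A) (hB : 0 ≤ B) :
    |Real.sqrt A - Real.sqrt B| ≤ Real.sqrt |A - B| := by
  wlog h : B ≤ A generalizing A B
  · rw [abs_sub_comm, abs_sub_comm A B]; exact this hB hA (le_of_not_ge h)
  rw [abs_of_nonneg (sub_nonneg.2 (Real.sqrt_le_sqrt h)), abs_of_nonneg (sub_nonneg.2 h),
    sub_le_iff_le_add]
  have h2 : A ≤ (Real.sqrt (A - B) + Real.sqrt B) ^ 2 := by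
    have e1 := Real.sq_sqrt (sub_nonneg.2 h)
    have e2 := Real.sq_sqrt hB
    nlinarith [mul_nonneg (Real.sqrt_nonneg (A - B)) (Real.sqrt_nonneg B)]
  calc Real.sqrt A ≤ Real.sqrt ((Real.sqrt (A - B) + Real.sqrt B) ^ 2) :=
        Real.sqrt_le_sqrt h2
    _ = Real.sqrt (A - B) + Real.sqrt B := Real.sqrt_sq (by positivity)

lemma quad_form_one {d : ℕ} (w u : Fin d → ℝ) :
    u ⬝ᵥ (vecMulVec w w).mulVec u = (w ⬝ᵥ u) ^ 2 := by
  simp only [dotProduct, mulVec, vecMulVec, Matrix.of_apply, sq, Finset.sum_mul,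
    Finset.mul_sum]
  refine Finset.sum_congr rfl fun j _ => Finset.sum_congr rfl fun k _ => ?_
  ring

lemma quad_form_sum {d : ℕ} (v : Fin d → (Fin d → ℝ)) (u : Fin d → ℝ) :
    u ⬝ᵥ (∑ i, vecMulVec (v i) (v i)).mulVec u = ∑ i, (v i ⬝ᵥ u) ^ 2 := by
  have h1 : (∑ i, vecMulVec (v i) (v i)).mulVec u
      = ∑ i, (vecMulVec (v i) (v i)).mulVec u := by
    ext j
    simp only [mulVec, dotProduct, Matrix.sum_apply, Finset.sum_mul, Finset.sum_apply]
    exact Finset.sum_comm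
  rw [h1]
  have h2 : u ⬝ᵥ (∑ i, (vecMulVec (v i) (v i)).mulVec u)
      = ∑ i, u ⬝ᵥ (vecMulVec (v i) (v i)).mulVec u := by
    simp only [dotProduct, Finset.sum_apply, Finset.mul_sum]
    exact Finset.sum_comm
  rw [h2]
  exact Finset.sum_congr rfl fun i _ => quad_form_one _ _

/-- If `‖x_i − y_i‖₂ ≤ ξ` and `‖y_i‖₂ ≤ a` for all `i`, then for every vector `u`
with `‖u‖₂ ≤ L`, the weighted norms under `X = Σ x_i x_iᵀ` and `Y = Σ y_i y_iᵀ`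
satisfy `|‖u‖_X − ‖u‖_Y| ≤ L √(dξ² + 2daξ)`. -/
theorem rank_one_sum_weighted_norm_perturbation
    {d : ℕ} (hd : 1 ≤ d) (ξ a L : ℝ) (hξ : 0 < ξ) (ha : 0 < a) (hL : 0 < L)
    (x y : Fin d → (Fin d → ℝ))
    (hxy : ∀ i, euclNorm (x i - y i) ≤ ξ)
    (hy : ∀ i, euclNorm (y i) ≤ a)
    (X Y : Matrix (Fin d) (Fin d) ℝ)
    (hX : X = ∑ i, vecMulVec (x i) (x i))
    (hY : Y = ∑ i, vecMulVec (y i) (y i))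
    (u : Fin d → ℝ) (hu : euclNorm u ≤ L) :
    |mnorm X u - mnorm Y u| ≤ L * Real.sqrt (d * ξ ^ 2 + 2 * d * a * ξ) := by
  have hunn : 0 ≤ euclNorm u := euclNorm_nonneg u
  set A : ℝ := u ⬝ᵥ X.mulVec u with hA
  set B : ℝ := u ⬝ᵥ Y.mulVec u with hB
  have hAval : A = ∑ i, (x i ⬝ᵥ u) ^ 2 := by rw [hA, hX, quad_form_sum]
  have hBval : B = ∑ i, (y i ⬝ᵥ u) ^ 2 := by rw [hB, hY, quad_form_sum]
  have hAnn : 0 ≤ A := hAval ▸ Finset.sum_nonneg fun i _ => sq_nonneg _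
  have hBnn : 0 ≤ B := hBval ▸ Finset.sum_nonneg fun i _ => sq_nonneg _
  have key : |A - B| ≤ L ^ 2 * (d * ξ ^ 2 + 2 * d * a * ξ) := by
    have hterm : ∀ i, |(x i ⬝ᵥ u) ^ 2 - (y i ⬝ᵥ u) ^ 2| ≤ L ^ 2 * (ξ ^ 2 + 2 * a * ξ) := by
      intro i
      have h1 : |(x i - y i) ⬝ᵥ u| ≤ ξ * L := by
        refine le_trans (abs_dot_le _ _) ?_
        exact mul_le_mul (hxy i) hu hunn hξ.le
      have h2 : |y i ⬝ᵥ u| ≤ a * L := by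
        refine le_trans (abs_dot_le _ _) ?_
        exact mul_le_mul (hy i) hu hunn ha.le
      have hsub : (x i - y i) ⬝ᵥ u = x i ⬝ᵥ u - y i ⬝ᵥ u := by
        simp [sub_dotProduct]
      have hfac : (x i ⬝ᵥ u) ^ 2 - (y i ⬝ᵥ u) ^ 2
          = ((x i - y i) ⬝ᵥ u) * ((x i - y i) ⬝ᵥ u + 2 * (y i ⬝ᵥ u)) := by
        rw [hsub]; ring
      rw [hfac, abs_mul]
      have h3 : |(x i - y i) ⬝ᵥ u + 2 * (y i ⬝ᵥ u)| ≤ ξ * L + 2 * (a * L) := by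
        refine le_trans (abs_add_le _ _) (add_le_add h1 ?_)
        rw [abs_mul, abs_two]
        linarith
      have := mul_le_mul h1 h3 (abs_nonneg _) (by positivity)
      calc |(x i - y i) ⬝ᵥ u| * |(x i - y i) ⬝ᵥ u + 2 * (y i ⬝ᵥ u)|
          ≤ ξ * L * (ξ * L + 2 * (a * L)) := this
        _ = L ^ 2 * (ξ ^ 2 + 2 * a * ξ) := by ring
    calc |A - B| = |∑ i, ((x i ⬝ᵥ u) ^ 2 - (y i ⬝ᵥ u) ^ 2)| := by
          rw [hAval, hBval, Finset.sum_sub_distrib]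
      _ ≤ ∑ i, |(x i ⬝ᵥ u) ^ 2 - (y i ⬝ᵥ u) ^ 2| := Finset.abs_sum_le_sum_abs _ _
      _ ≤ ∑ _i : Fin d, L ^ 2 * (ξ ^ 2 + 2 * a * ξ) := Finset.sum_le_sum fun i _ => hterm i
      _ = d * (L ^ 2 * (ξ ^ 2 + 2 * a * ξ)) := by
          rw [Finset.sum_const, Finset.card_univ, Fintype.card_fin, nsmul_eq_mul]
      _ = L ^ 2 * (d * ξ ^ 2 + 2 * d * a * ξ) := by ring
  have h1 : |mnorm X u - mnorm Y u| ≤ Real.sqrt |A - B| := abs_sqrt_sub_sqrt hAnn hBnn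
  refine h1.trans ?_
  calc Real.sqrt |A - B| ≤ Real.sqrt (L ^ 2 * (d * ξ ^ 2 + 2 * d * a * ξ)) :=
        Real.sqrt_le_sqrt key
    _ = L * Real.sqrt (d * ξ ^ 2 + 2 * d * a * ξ) := by
        rw [Real.sqrt_mul (sq_nonneg L), Real.sqrt_sq hL.le]
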